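/- Assume P(I(Θ) ∈ ℤ) = 1. Let A ⊆ E be a measurable set which is shift invariant (x ∈ A if and only if Bx ∈ A) and homogeneous (x ∈ A implies tx ∈ A for all t > 0). Then the following statements are equivalent: (i) ν(A) = 0; (ii) P(Θ ∈ A) = 0; (iii) P(Θ ∈ A | I(Θ) = 0) = 0. -/

import Mathlib

open MeasureTheory ProbabilityTheory Set Filter
open scoped ENNReal NNReal Topology

noncomputable section

/-- The iterated backshift operator: `(B^k x) j = x (j - k)`. -/
def backshift {V : Type*} (k : ℤ) (x : ℤ → V) : ℤ → V := fun j => x (j - k)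

/-- `InfargmaxAt x j` is the event `I(x) = j` for the infargmax functional `I`:
the first time the supremum of the norms is achieved is `j`, i.e.
`sup_{i<j} ‖x_i‖ < ‖x_j‖` and `sup_{i>j} ‖x_i‖ ≤ ‖x_j‖`.  (`I(x) ∈ ℤ` is then
expressed as `∃ j, InfargmaxAt x j`.) -/
def InfargmaxAt {V : Type*} [NormedAddCommGroup V] (x : ℤ → V) (j : ℤ) : Prop :=
  (⨆ i : {i : ℤ // i < j}, (‖x i.1‖₊ : ℝ≥0∞)) < (‖x j‖₊ : ℝ≥0∞) ∧
    (⨆ i : {i : ℤ // j < i}, (‖x i.1‖₊ : ℝ≥0∞)) ≤ (‖x j‖₊ : ℝ≥0∞)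

/-!
On `{‖y₀‖ > 1}` the measure `ν` is the law of `Y`, and a cone `A` contains `Θ = Y / ‖Y₀‖` iff it
contains `Y`, so `P(Θ ∈ A) = ν(A ∩ {‖y₀‖ > 1})`. Homogeneity of `ν` turns the vanishing of this
into `ν(A ∩ {y₀ ≠ 0}) = 0`, shift invariance of `ν` and `A` into `ν(A ∩ {y_j ≠ 0}) = 0` for every
`j`, and these sets together with `{0}` cover `A`.

For the conditional statement, the shift by `j` gives
`P(Θ ∈ A, I(Θ) = j) = ν(A ∩ {I = 0} ∩ {‖y_{-j}‖ > 1}) ≤ ν(A ∩ {I = 0} ∩ {‖y₀‖ > 1})`,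
which is `P(Θ ∈ A, I(Θ) = 0)`, since `y₀` has the largest norm on `{I = 0}`. As `I(Θ) ∈ ℤ`
almost surely, summing over `j` bounds `P(Θ ∈ A)`.
-/

section Backshift

variable {V : Type*}

@[simp]
lemma backshift_apply (k : ℤ) (x : ℤ → V) (j : ℤ) : backshift k x j = x (j - k) := rfl

lemma backshift_backshift (k l : ℤ) (x : ℤ → V) :
    backshift k (backshift l x) = backshift (k + l) x := by
  funext j
  simp only [backshift_apply, sub_sub]

@[simp]
lemma backshift_zero : backshift 0 = (id : (ℤ → V) → ℤ → V) := by
  funext x j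
  simp

lemma measurable_backshift [MeasurableSpace V] (k : ℤ) :
    Measurable (backshift k : (ℤ → V) → ℤ → V) :=
  measurable_pi_lambda _ fun j => measurable_pi_apply (j - k)

lemma preimage_backshift_eq_self {A : Set (ℤ → V)} (hA : backshift 1 ⁻¹' A = A) (k : ℤ) :
    backshift k ⁻¹' A = A := by
  have hneg : backshift (-1) ⁻¹' A = A := by
    conv_lhs => rw [← hA, ← preimage_comp]
    ext x
    simp [backshift_backshift]
  induction k using Int.induction_on with
  | zero => simp
  | succ n ih =>
    ext x
    rw [add_comm, mem_preimage, ← backshift_backshift, ← mem_preimage, hA, ← mem_preimage, ih]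
  | pred n ih =>
    ext x
    rw [sub_eq_neg_add, mem_preimage, ← backshift_backshift, ← mem_preimage, hneg,
      ← mem_preimage, ih]

lemma measurePreserving_backshift [MeasurableSpace V] {μ : Measure (ℤ → V)}
    (hμ : μ.map (backshift 1) = μ) (k : ℤ) : MeasurePreserving (backshift k) μ μ := by
  have h1 : MeasurePreserving (backshift 1) μ μ := ⟨measurable_backshift 1, hμ⟩
  have hneg : MeasurePreserving (backshift (-1)) μ μ := by
    refine ⟨measurable_backshift (-1), ?_⟩
    conv_lhs => rw [← hμ]
    rw [Measure.map_map (measurable_backshift _) (measurable_backshift _)]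
    simp [Function.comp_def, backshift_backshift]
  induction k using Int.induction_on with
  | zero => simpa using MeasurePreserving.id μ
  | succ n ih =>
    convert h1.comp ih using 1
    funext x
    simp [backshift_backshift, add_comm]
  | pred n ih =>
    convert hneg.comp ih using 1
    funext x
    simp [backshift_backshift, sub_eq_neg_add]

end Backshift

section Infargmax

variable {V : Type*} [NormedAddCommGroup V]

lemma InfargmaxAt.norm_le {x : ℤ → V} {j : ℤ} (h : InfargmaxAt x j) (i : ℤ) :
    ‖x i‖ ≤ ‖x j‖ := by
  suffices (‖x i‖₊ : ℝ≥0∞) ≤ ‖x j‖₊ by exact_mod_cast this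
  rcases lt_trichotomy i j with hij | rfl | hji
  · exact (le_iSup_of_le (⟨i, hij⟩ : {i : ℤ // i < j}) le_rfl).trans h.1.le
  · exact le_rfl
  · exact (le_iSup_of_le (⟨i, hji⟩ : {i : ℤ // j < i}) le_rfl).trans h.2

lemma infargmaxAt_smul [NormedSpace ℝ V] {c : ℝ} (hc : 0 < c) (x : ℤ → V) (j : ℤ) :
    InfargmaxAt (c • x) j ↔ InfargmaxAt x j := by
  have hc0 : (‖c‖₊ : ℝ≥0∞) ≠ 0 := by simp [hc.ne']
  simp only [InfargmaxAt, Pi.smul_apply, nnnorm_smul, ENNReal.coe_mul, ← ENNReal.mul_iSup,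
    ENNReal.mul_lt_mul_iff_right hc0 ENNReal.coe_ne_top,
    ENNReal.mul_le_mul_iff_right hc0 ENNReal.coe_ne_top]

lemma infargmaxAt_backshift (k : ℤ) (x : ℤ → V) (j : ℤ) :
    InfargmaxAt (backshift k x) j ↔ InfargmaxAt x (j - k) := by
  have reindex (p q : ℤ → ℤ → Prop) (hpq : ∀ i, p i j ↔ q (i - k) (j - k)) :
      (⨆ i : {i : ℤ // p i j}, (‖backshift k x i.1‖₊ : ℝ≥0∞))
        = ⨆ i : {i : ℤ // q i (j - k)}, (‖x i.1‖₊ : ℝ≥0∞) := by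
    apply le_antisymm
    · exact iSup_le fun i => le_iSup_of_le ⟨i.1 - k, (hpq i).1 i.2⟩ le_rfl
    · refine iSup_le fun i => le_iSup_of_le ⟨i.1 + k, (hpq _).2 (by simpa using i.2)⟩ ?_
      simp
  rw [InfargmaxAt, InfargmaxAt, reindex (· < ·) (· < ·) (fun i => by simp),
    reindex (fun i j => j < i) (fun i j => j < i) (fun i => by simp)]
  simp

lemma measurableSet_infargmaxAt [MeasurableSpace V] [OpensMeasurableSpace V] (j : ℤ) :
    MeasurableSet {x : ℤ → V | InfargmaxAt x j} := by
  have hf (i : ℤ) : Measurable fun x : ℤ → V => (‖x i‖₊ : ℝ≥0∞) :=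
    (measurable_pi_apply i).nnnorm.coe_nnreal_ennreal
  exact (measurableSet_lt (Measurable.iSup fun i => hf _) (hf j)).inter
    (measurableSet_le (Measurable.iSup fun i => hf _) (hf j))

end Infargmax

def IsScaleInvariant {E : Type*} [SMul ℝ E] (A : Set E) : Prop :=
  ∀ x ∈ A, ∀ t : ℝ, 0 < t → t • x ∈ A

namespace IsScaleInvariant

variable {E : Type*} [MulAction ℝ E] {A B : Set E}

lemma smul_mem_iff (hA : IsScaleInvariant A) {t : ℝ} (ht : 0 < t) {x : E} :
    t • x ∈ A ↔ x ∈ A := by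
  refine ⟨fun h => ?_, fun h => hA x h t ht⟩
  simpa [smul_smul, inv_mul_cancel₀ ht.ne'] using hA _ h t⁻¹ (inv_pos.2 ht)

lemma inter (hA : IsScaleInvariant A) (hB : IsScaleInvariant B) : IsScaleInvariant (A ∩ B) :=
  fun x hx t ht => ⟨hA x hx.1 t ht, hB x hx.2 t ht⟩

end IsScaleInvariant

lemma isScaleInvariant_setOf_infargmaxAt {V : Type*} [NormedAddCommGroup V] [NormedSpace ℝ V]
    (j : ℤ) : IsScaleInvariant {x : ℤ → V | InfargmaxAt x j} :=
  fun x hx _ ht => (infargmaxAt_smul ht x j).2 hx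

lemma measurableSet_one_lt_norm_apply {V : Type*} [NormedAddCommGroup V] [MeasurableSpace V]
    [OpensMeasurableSpace V] (k : ℤ) : MeasurableSet {y : ℤ → V | 1 < ‖y k‖} :=
  measurableSet_lt measurable_const (measurable_pi_apply k).norm

lemma measure_eq_zero_of_inter_apply_ne_zero {V : Type*} [Zero V] [MeasurableSpace V]
    [MeasurableSingletonClass V] {ν : Measure (ℤ → V)} {T : Set (ℤ → V)} (hν0 : ν {0} = 0)
    (hνshift : ν.map (backshift 1) = ν) (hT : MeasurableSet T) (hTsh : backshift 1 ⁻¹' T = T)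
    (h : ν (T ∩ {y | y 0 ≠ 0}) = 0) : ν T = 0 := by
  have hcover : T ⊆ {0} ∪ ⋃ j : ℤ, backshift (-j) ⁻¹' (T ∩ {y | y 0 ≠ 0}) := by
    intro x hx
    by_cases hx0 : x = 0
    · exact Or.inl hx0
    obtain ⟨j, hj⟩ := Function.ne_iff.1 hx0
    refine Or.inr (mem_iUnion.2 ⟨j, ?_, ?_⟩)
    · rwa [← preimage_backshift_eq_self hTsh (-j)] at hx
    · simpa using hj
  have hmeas : MeasurableSet (T ∩ {y : ℤ → V | y 0 ≠ 0}) :=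
    hT.inter ((measurableSet_singleton 0).compl.preimage (measurable_pi_apply 0))
  refine measure_mono_null hcover (measure_union_null hν0 (measure_iUnion_null fun j => ?_))
  rw [(measurePreserving_backshift hνshift (-j)).measure_preimage hmeas.nullMeasurableSet, h]

lemma measure_inter_apply_ne_zero_eq_zero {V : Type*} [NormedAddCommGroup V] [NormedSpace ℝ V]
    [MeasurableSpace V] [OpensMeasurableSpace V] {ν : Measure (ℤ → V)} {T : Set (ℤ → V)} {α : ℝ}
    (hνhom : ∀ A : Set (ℤ → V), MeasurableSet A → ∀ c : ℝ, 0 < c →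
      ν ((fun x => c • x) '' A) = ENNReal.ofReal (c ^ (-α)) * ν A)
    (hT : MeasurableSet T) (hTs : IsScaleInvariant T) (h : ν (T ∩ {y | 1 < ‖y 0‖}) = 0) :
    ν (T ∩ {y | y 0 ≠ 0}) = 0 := by
  have hcover : T ∩ {y | y 0 ≠ 0}
      ⊆ ⋃ n : ℕ, (fun x => ((n : ℝ) + 1)⁻¹ • x) '' (T ∩ {y | 1 < ‖y 0‖}) := by
    rintro x ⟨hxT, hx0⟩
    obtain ⟨n, hn⟩ := exists_nat_one_div_lt (norm_pos_iff.2 hx0)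
    have hc : (0 : ℝ) < (n : ℝ) + 1 := by positivity
    refine mem_iUnion.2 ⟨n, ((n : ℝ) + 1) • x, ⟨hTs x hxT _ hc, ?_⟩, ?_⟩
    · rw [one_div] at hn
      simpa [norm_smul, abs_of_pos hc] using (inv_lt_iff_one_lt_mul₀' hc).1 hn
    · simp [smul_smul, inv_mul_cancel₀ hc.ne']
  refine measure_mono_null hcover (measure_iUnion_null fun n => ?_)
  rw [hνhom _ (hT.inter (measurableSet_one_lt_norm_apply 0)) _ (by positivity), h, mul_zero]

lemma measurable_spectral {V : Type*} [NormedAddCommGroup V] [NormedSpace ℝ V]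
    [MeasurableSpace V] [BorelSpace V] {Ω : Type*} [MeasurableSpace Ω] {Y Θ : Ω → ℤ → V}
    (hY : Measurable Y) (hΘ : ∀ ω, Θ ω = ‖Y ω 0‖⁻¹ • Y ω) : Measurable Θ := by
  rw [show Θ = fun ω => ‖Y ω 0‖⁻¹ • Y ω from funext hΘ]
  exact measurable_pi_lambda _ fun j =>
    ((measurable_pi_apply 0).comp hY).norm.inv.smul ((measurable_pi_apply j).comp hY)

section SpectralTailProcess

variable {V : Type*} [NormedAddCommGroup V] [NormedSpace ℝ V] [MeasurableSpace V]
  [OpensMeasurableSpace V] {ν : Measure (ℤ → V)} {Ω : Type*} [MeasurableSpace Ω]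
  {P : Measure Ω} {Y Θ : Ω → ℤ → V} {A : Set (ℤ → V)}

lemma measure_preimage_spectral_eq {T : Set (ℤ → V)} (hY : Measurable Y)
    (hYlaw : P.map Y = ν.restrict {y | 1 < ‖y 0‖}) (hΘ : ∀ ω, Θ ω = ‖Y ω 0‖⁻¹ • Y ω)
    (hT : MeasurableSet T) (hTs : IsScaleInvariant T) :
    P (Θ ⁻¹' T) = ν (T ∩ {y | 1 < ‖y 0‖}) := by
  have hG := measurableSet_one_lt_norm_apply (V := V) 0
  have hY0 : ∀ᵐ ω ∂P, 1 < ‖Y ω 0‖ :=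
    ae_of_ae_map hY.aemeasurable (hYlaw ▸ ae_restrict_mem hG)
  have hΘY : Θ ⁻¹' T =ᵐ[P] Y ⁻¹' T := by
    refine eventuallyEq_set.2 (hY0.mono fun ω hω => ?_)
    rw [mem_preimage, hΘ, hTs.smul_mem_iff (inv_pos.2 (one_pos.trans hω)), mem_preimage]
  rw [measure_congr hΘY, ← Measure.map_apply hY hT, hYlaw, Measure.restrict_apply hT]

lemma measure_eq_zero_iff_measure_preimage_spectral_eq_zero {α : ℝ} (hν0 : ν {0} = 0)
    (hνshift : ν.map (backshift 1) = ν)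
    (hνhom : ∀ A : Set (ℤ → V), MeasurableSet A → ∀ c : ℝ, 0 < c →
      ν ((fun x => c • x) '' A) = ENNReal.ofReal (c ^ (-α)) * ν A)
    (hY : Measurable Y) (hYlaw : P.map Y = ν.restrict {y | 1 < ‖y 0‖})
    (hΘ : ∀ ω, Θ ω = ‖Y ω 0‖⁻¹ • Y ω) (hA : MeasurableSet A) (hAs : IsScaleInvariant A)
    (hAsh : backshift 1 ⁻¹' A = A) :
    ν A = 0 ↔ P (Θ ⁻¹' A) = 0 := by
  rw [measure_preimage_spectral_eq hY hYlaw hΘ hA hAs]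
  exact ⟨measure_mono_null inter_subset_left, fun h => measure_eq_zero_of_inter_apply_ne_zero
    hν0 hνshift hA hAsh (measure_inter_apply_ne_zero_eq_zero hνhom hA hAs h)⟩

lemma measure_preimage_spectral_inter_infargmaxAt_le (hνshift : ν.map (backshift 1) = ν)
    (hY : Measurable Y) (hYlaw : P.map Y = ν.restrict {y | 1 < ‖y 0‖})
    (hΘ : ∀ ω, Θ ω = ‖Y ω 0‖⁻¹ • Y ω) (hA : MeasurableSet A) (hAs : IsScaleInvariant A)
    (hAsh : backshift 1 ⁻¹' A = A) (j : ℤ) :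
    P (Θ ⁻¹' (A ∩ {x | InfargmaxAt x j})) ≤ P (Θ ⁻¹' (A ∩ {x | InfargmaxAt x 0})) := by
  have hS (i : ℤ) := hA.inter (measurableSet_infargmaxAt (V := V) i)
  have hSs (i : ℤ) := hAs.inter (isScaleInvariant_setOf_infargmaxAt (V := V) i)
  rw [measure_preimage_spectral_eq hY hYlaw hΘ (hS j) (hSs j),
    measure_preimage_spectral_eq hY hYlaw hΘ (hS 0) (hSs 0)]
  have hpre : backshift j ⁻¹' (A ∩ {x | InfargmaxAt x j} ∩ {y | 1 < ‖y 0‖})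
      = A ∩ {x | InfargmaxAt x 0} ∩ {y | 1 < ‖y (-j)‖} := by
    have hAj (x : ℤ → V) : backshift j x ∈ A ↔ x ∈ A := by
      rw [← mem_preimage, preimage_backshift_eq_self hAsh]
    ext x
    simp [hAj, infargmaxAt_backshift]
  calc ν (A ∩ {x | InfargmaxAt x j} ∩ {y | 1 < ‖y 0‖})
      = ν (A ∩ {x | InfargmaxAt x 0} ∩ {y | 1 < ‖y (-j)‖}) := by
        rw [← hpre, (measurePreserving_backshift hνshift j).measure_preimage
          ((hS j).inter (measurableSet_one_lt_norm_apply 0)).nullMeasurableSet]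
    _ ≤ ν (A ∩ {x | InfargmaxAt x 0} ∩ {y | 1 < ‖y 0‖}) :=
        measure_mono fun x ⟨hx, hxj⟩ => ⟨hx, hxj.trans_le (hx.2.norm_le _)⟩

lemma measure_preimage_spectral_eq_zero_iff_inter_infargmaxAt_zero
    (hνshift : ν.map (backshift 1) = ν)
    (hY : Measurable Y) (hYlaw : P.map Y = ν.restrict {y | 1 < ‖y 0‖})
    (hΘ : ∀ ω, Θ ω = ‖Y ω 0‖⁻¹ • Y ω) (hI : ∀ᵐ ω ∂P, ∃ j, InfargmaxAt (Θ ω) j)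
    (hA : MeasurableSet A) (hAs : IsScaleInvariant A) (hAsh : backshift 1 ⁻¹' A = A) :
    P (Θ ⁻¹' A) = 0 ↔ P (Θ ⁻¹' (A ∩ {x | InfargmaxAt x 0})) = 0 := by
  refine ⟨measure_mono_null (preimage_mono inter_subset_left), fun h => ?_⟩
  have hcover : Θ ⁻¹' A ≤ᵐ[P] ⋃ j, Θ ⁻¹' (A ∩ {x | InfargmaxAt x j}) :=
    hI.mono fun ω ⟨j, hj⟩ hω => mem_iUnion.2 ⟨j, hω, hj⟩
  refine measure_mono_null_ae hcover (measure_iUnion_null fun j => ?_)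
  exact le_antisymm ((measure_preimage_spectral_inter_infargmaxAt_le hνshift hY hYlaw hΘ
    hA hAs hAsh j).trans h.le) zero_le

end SpectralTailProcess

theorem statement5_general
    -- `V` plays the role of `ℝ^d` (`d ≥ 1`) equipped with an arbitrary norm
    {V : Type*} [NormedAddCommGroup V] [NormedSpace ℝ V]
    [MeasurableSpace V] [BorelSpace V]
    (α : ℝ)
    -- the tail measure and its properties
    (ν : Measure (ℤ → V))
    (hν0 : ν {0} = 0)
    (hνshift : ν.map (backshift 1) = ν)
    (hνhom : ∀ A : Set (ℤ → V), MeasurableSet A → ∀ c : ℝ, 0 < c →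
      ν ((fun x => c • x) '' A) = ENNReal.ofReal (c ^ (-α)) * ν A)
    -- the tail process `Y` and the spectral tail process `Θ`
    {Ω : Type*} [MeasurableSpace Ω] (P : Measure Ω) [IsProbabilityMeasure P]
    (Y : Ω → ℤ → V) (hYmeas : Measurable Y)
    (hYlaw : P.map Y = ν.restrict {y : ℤ → V | 1 < ‖y 0‖})
    (Θ : Ω → ℤ → V) (hΘdef : ∀ ω, Θ ω = ‖Y ω 0‖⁻¹ • Y ω)
    -- the statement
    (hI : P {ω | ∃ j : ℤ, InfargmaxAt (Θ ω) j} = 1)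
    (A : Set (ℤ → V)) (hAmeas : MeasurableSet A)
    (hAshift : ∀ x, x ∈ A ↔ backshift 1 x ∈ A)
    (hAhom : ∀ x ∈ A, ∀ t : ℝ, 0 < t → t • x ∈ A) :
    (ν A = 0 ↔ P (Θ ⁻¹' A) = 0) ∧
      (P (Θ ⁻¹' A) = 0 ↔
        ProbabilityTheory.cond P {ω | InfargmaxAt (Θ ω) 0} (Θ ⁻¹' A) = 0) := by
  have hΘmeas := measurable_spectral hYmeas hΘdef
  have hAsh : backshift 1 ⁻¹' A = A := Set.ext fun x => (hAshift x).symm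
  have hS (j : ℤ) : MeasurableSet {ω | InfargmaxAt (Θ ω) j} :=
    hΘmeas (measurableSet_infargmaxAt j)
  have hIae : ∀ᵐ ω ∂P, ∃ j, InfargmaxAt (Θ ω) j := by
    have hU : MeasurableSet {ω | ∃ j, InfargmaxAt (Θ ω) j} := by
      simpa only [ofPred_exists] using MeasurableSet.iUnion hS
    exact (prob_compl_eq_zero_iff hU).2 hI
  refine ⟨measure_eq_zero_iff_measure_preimage_spectral_eq_zero hν0 hνshift hνhom hYmeas hYlaw
    hΘdef hAmeas hAhom hAsh, ?_⟩
  rw [measure_preimage_spectral_eq_zero_iff_inter_infargmaxAt_zero hνshift hYmeas hYlaw hΘdef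
    hIae hAmeas hAhom hAsh, cond_apply (hS 0)]
  simp [measure_ne_top, inter_comm]

/-- **Refined zero-infinity law.**  Assume `P(I(Θ) ∈ ℤ) = 1`.  If `A` is measurable,
shift invariant and homogeneous, then `ν(A) = 0 ↔ P(Θ ∈ A) = 0 ↔ P(Θ ∈ A | I(Θ) = 0) = 0`. -/
theorem statement5
    -- `V` plays the role of `ℝ^d` (`d ≥ 1`) equipped with an arbitrary norm
    {V : Type*} [NormedAddCommGroup V] [NormedSpace ℝ V] [FiniteDimensional ℝ V]
    [Nontrivial V] [MeasurableSpace V] [BorelSpace V]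
    (α : ℝ) (hα : 0 < α)
    -- the tail measure and its properties
    (ν : Measure (ℤ → V))
    (hν0 : ν {0} = 0)
    (hν1 : ν {y : ℤ → V | 1 < ‖y 0‖} = 1)
    (hνshift : ν.map (backshift 1) = ν)
    (hνhom : ∀ A : Set (ℤ → V), MeasurableSet A → ∀ c : ℝ, 0 < c →
      ν ((fun x => c • x) '' A) = ENNReal.ofReal (c ^ (-α)) * ν A)
    -- the tail process `Y` and the spectral tail process `Θ`
    {Ω : Type*} [MeasurableSpace Ω] (P : Measure Ω) [IsProbabilityMeasure P]
    (Y : Ω → ℤ → V) (hYmeas : Measurable Y)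
    (hYlaw : P.map Y = ν.restrict {y : ℤ → V | 1 < ‖y 0‖})
    (Θ : Ω → ℤ → V) (hΘdef : ∀ ω, Θ ω = ‖Y ω 0‖⁻¹ • Y ω)
    (hPareto : ∀ u : ℝ, 1 ≤ u → P {ω | u < ‖Y ω 0‖} = ENNReal.ofReal (u ^ (-α)))
    (hindep : IndepFun (fun ω => ‖Y ω 0‖) Θ P)
    (hpolar : ∀ H : (ℤ → V) → ℝ≥0∞, Measurable H →
      ∫⁻ y in {y : ℤ → V | y 0 ≠ 0}, H y ∂ν
        = ∫⁻ r in Ioi (0 : ℝ),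
            (∫⁻ ω, H (r • Θ ω) ∂P) * ENNReal.ofReal (α * r ^ (-α - 1)))
    -- the statement
    (hI : P {ω | ∃ j : ℤ, InfargmaxAt (Θ ω) j} = 1)
    (A : Set (ℤ → V)) (hAmeas : MeasurableSet A)
    (hAshift : ∀ x, x ∈ A ↔ backshift 1 x ∈ A)
    (hAhom : ∀ x ∈ A, ∀ t : ℝ, 0 < t → t • x ∈ A) :
    (ν A = 0 ↔ P (Θ ⁻¹' A) = 0) ∧
      (P (Θ ⁻¹' A) = 0 ↔
        ProbabilityTheory.cond P {ω | InfargmaxAt (Θ ω) 0} (Θ ⁻¹' A) = 0) :=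
  statement5_general α ν hν0 hνshift hνhom P Y hYmeas hYlaw Θ hΘdef hI A hAmeas hAshift hAhom
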